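/- arXiv:1903.04926 — 2 statements merged into one kernel-verified Lean document; each statement's English description precedes it below -/
import Mathlib

section
/- Let N be a compact, connected, nonorientable surface of genus g with n boundary components with g + n ≥ 5 and g even. Define Z_1 = C (the finite superrigid set C_1 ∪ ⋯ ∪ C_6) and, for k ≥ 2, Z_k = Z_{k−1} ∪ ⋃_{f ∈ G_1} (f(Z_{k−1}) ∪ f^{−1}(Z_{k−1})), where G_1 is the stated generating set of Mod_N. Then each Z_k is a finite superrigid set in C(N) with trivial pointwise stabilizer in Mod_N, Z_1 ⊂ Z_2 ⊂ ⋯, and ⋃_{k∈ℕ} Z_k = C(N). -/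
/-- Abstract data of the curve complex `C(N)` of a compact, connected, nonorientable
surface `N` of genus `g` with `n` boundary components, together with the action of the
mapping class group `Mod_N` on it.  `Vertex` is the set of isotopy classes of nontrivial
simple closed curves, `inter` is the geometric intersection number (recall that
`inter v v = 1` iff `v` is one-sided and `inter v v = 0` iff `v` is two-sided), `MCG` is
the mapping class group (isotopy classes of self-homeomorphisms) and `act` is its action
on isotopy classes of curves. -/
structure CurveSystem : Type 1 where
  Vertex : Type
  inter : Vertex → Vertex → ℕ
  inter_symm : ∀ a b, inter a b = inter b a
  MCG : Type
  [grp : Group MCG]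
  act : MCG → Vertex → Vertex
  act_one : ∀ v, act 1 v = v
  act_mul : ∀ f g v, act (f * g) v = act f (act g v)
  act_inter : ∀ f a b, inter (act f a) (act f b) = inter a b

attribute [instance] CurveSystem.grp

namespace CurveSystem

variable (S : CurveSystem)

/-- `l` is a simplicial map on the subcomplex spanned by `A`: simplices map to simplices,
i.e. distinct disjoint vertices are sent to equal or disjoint vertices. -/
def SimplicialOn (A : Set S.Vertex) (l : S.Vertex → S.Vertex) : Prop :=
  ∀ a ∈ A, ∀ b ∈ A, a ≠ b → S.inter a b = 0 → (l a = l b ∨ S.inter (l a) (l b) = 0)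

/-- `l` is superinjective on `A`: nonzero geometric intersection is preserved. -/
def SuperinjectiveOn (A : Set S.Vertex) (l : S.Vertex → S.Vertex) : Prop :=
  ∀ a ∈ A, ∀ b ∈ A, S.inter a b ≠ 0 → S.inter (l a) (l b) ≠ 0

/-- `l` is induced on `A` by a homeomorphism of the surface. -/
def InducedOn (A : Set S.Vertex) (l : S.Vertex → S.Vertex) : Prop :=
  ∃ h : S.MCG, ∀ v ∈ A, S.act h v = l v

/-- `A` is superrigid: every superinjective simplicial map of `A` into the curve
complex is induced by a homeomorphism. -/
def Superrigid (A : Set S.Vertex) : Prop :=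
  ∀ l : S.Vertex → S.Vertex, S.SimplicialOn A l → S.SuperinjectiveOn A l → S.InducedOn A l

/-- The pointwise stabilizer of `A` in the mapping class group is trivial. -/
def TrivialPointwiseStabilizer (A : Set S.Vertex) : Prop :=
  ∀ f : S.MCG, (∀ v ∈ A, S.act f v = v) → f = 1

/-- The star of `v` in `A`: `v` together with the vertices of `A` disjoint from it. -/
def star (A : Set S.Vertex) (v : S.Vertex) : Set S.Vertex :=
  {w | w ∈ A ∧ (w = v ∨ S.inter v w = 0)}

/-- `l` is locally injective on `A`: injective on the star of every vertex. -/
def LocallyInjectiveOn (A : Set S.Vertex) (l : S.Vertex → S.Vertex) : Prop :=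
  ∀ v ∈ A, Set.InjOn l (S.star A v)

/-- `A` is rigid: every locally injective simplicial map of `A` into the curve complex
is induced by a homeomorphism. -/
def Rigid (A : Set S.Vertex) : Prop :=
  ∀ l : S.Vertex → S.Vertex, S.SimplicialOn A l → S.LocallyInjectiveOn A l → S.InducedOn A l

end CurveSystem

namespace CurveSystem

/-- The representative in `{1, …, m}` of an integer index, taken mod `m`. -/
def wrapIdx (m : ℕ) (x : ℤ) : ℕ := (((x - 1) % (m : ℤ)) + 1).toNat

/-- The Ilbira–Korkmaz finite rigid set `X = C₁`, given the curves `a i` (= `a_i`, the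
one-sided curve coming from the arc `s_i`), `A i j` (= `a_{i,j}`, the one-sided curve
from the segment joining the midpoint of `s_i` to `e_j`, for `1 ≤ i ≤ g`,
`1 ≤ j ≤ g+n`, `j ≠ i`, `j ≠ i-1 (mod g+n)`) and `B i j` (= `b_{i,j}`, the two-sided
curve from the segment joining `e_i` to `e_j`, for `2 ≤ |i-j| ≤ g+n-2`) of the
`(2g+2n)`-gon model of `N`. -/
def IKset (S : CurveSystem) (g n : ℕ) (a : ℕ → S.Vertex) (A B : ℕ → ℕ → S.Vertex) :
    Set S.Vertex :=
  (a '' Set.Icc 1 g) ∪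
    {v | ∃ i j : ℕ, 1 ≤ i ∧ i ≤ g ∧ 1 ≤ j ∧ j ≤ g + n ∧ j ≠ i ∧
      j ≠ wrapIdx (g + n) ((i : ℤ) - 1) ∧ v = A i j} ∪
    {v | ∃ i j : ℕ, 1 ≤ i ∧ i ≤ g + n ∧ 1 ≤ j ∧ j ≤ g + n ∧
      2 ≤ |(i : ℤ) - (j : ℤ)| ∧ |(i : ℤ) - (j : ℤ)| ≤ (g : ℤ) + (n : ℤ) - 2 ∧ v = B i j}

/-- The set `C₂ = {w₁, …, w_{g+n}, r₁, …, r_{g+n}}` of the paper's Figure 4. -/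
def C2set (S : CurveSystem) (g n : ℕ) (w r : ℕ → S.Vertex) : Set S.Vertex :=
  w '' Set.Icc 1 (g + n) ∪ r '' Set.Icc 1 (g + n)

end CurveSystem

namespace CurveSystem

/-- The set `C₃ = {c₁, …, c_{g-1}, d_{1,2}, …, d_{g-1,g}, u₁, …, u_{g-1}, v₁, …, v_{g-1}}`
of the paper's Figure 5 (i)–(iii), where `d i` denotes the curve `d_{i,i+1}`. -/
def C3set (S : CurveSystem) (g : ℕ) (c d u v : ℕ → S.Vertex) : Set S.Vertex :=
  c '' Set.Icc 1 (g - 1) ∪ d '' Set.Icc 1 (g - 1) ∪ u '' Set.Icc 1 (g - 1) ∪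
    v '' Set.Icc 1 (g - 1)

/-- The set `C₄ = {k₁, …, k_{g-1}, p₁, …, p_{g-1}, e_{1,2}, …, e_{g-1,g}, l₂, …, l_g,
r_{1,2}, …, r_{g-1,g}, y₂, …, y_g, s_{1,2}, …, s_{g-1,g}}` of the paper's Figure 5
(iv)–(xii), where `e i`, `r' i`, `s i` denote `e_{i,i+1}`, `r_{i,i+1}`, `s_{i,i+1}`. -/
def C4set (S : CurveSystem) (g : ℕ) (k p e l r' y s : ℕ → S.Vertex) : Set S.Vertex :=
  k '' Set.Icc 1 (g - 1) ∪ p '' Set.Icc 1 (g - 1) ∪ e '' Set.Icc 1 (g - 1) ∪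
    l '' Set.Icc 2 g ∪ r' '' Set.Icc 1 (g - 1) ∪ y '' Set.Icc 2 g ∪ s '' Set.Icc 1 (g - 1)

/-- The set `C₅`: `{l₀, l₁}` when `n ≤ 1` and `{l₁, d_{n-1}}` when `n ≥ 2`
(curves of the paper's Figures 6 (i) and 8 (vi)). -/
def C5set (S : CurveSystem) (n : ℕ) (l0 l1 dn1 : S.Vertex) : Set S.Vertex :=
  if n ≤ 1 then {l0, l1} else {l1, dn1}

/-- The set `C₆` of the curves `p_{i,j}`, `q_t`, `o_t` (`t` even) of the paper's
Figures 6–8: empty if `g ≤ 2`; for `g = 2k ≥ 4` the indices are `1 ≤ i ≤ k`,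
`0 ≤ j ≤ n`, `t = 2, 4, …, 2k`, and for `g = 2k+1 ≥ 3` they are `1 ≤ i ≤ k`,
`0 ≤ j ≤ n-1`, `t = 2, 4, …, 2k` (note `k = g / 2` in both cases). -/
def C6set (S : CurveSystem) (g n : ℕ) (p : ℕ → ℕ → S.Vertex) (q o : ℕ → S.Vertex) :
    Set S.Vertex :=
  if g ≤ 2 then ∅
  else
    {v | ∃ i j : ℕ, 1 ≤ i ∧ i ≤ g / 2 ∧ (if Even g then j ≤ n else j + 1 ≤ n) ∧
        v = p i j} ∪
      {v | ∃ t : ℕ, 1 ≤ t ∧ t ≤ g / 2 ∧ v = q (2 * t)} ∪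
      {v | ∃ t : ℕ, 1 ≤ t ∧ t ≤ g / 2 ∧ v = o (2 * t)}

end CurveSystem

namespace CurveSystem

/-- The full finite set of curves `C = C₁ ∪ C₂ ∪ C₃ ∪ C₄ ∪ C₅ ∪ C₆` of the paper's
Figures 3–8. -/
def Call (S : CurveSystem) (g n : ℕ) (a : ℕ → S.Vertex) (A B : ℕ → ℕ → S.Vertex)
    (w r c d u v k p e l r' y s : ℕ → S.Vertex) (l0 l1 dn1 : S.Vertex)
    (p6 : ℕ → ℕ → S.Vertex) (q6 o6 : ℕ → S.Vertex) : Set S.Vertex :=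
  IKset S g n a A B ∪ C2set S g n w r ∪ C3set S g c d u v ∪
    C4set S g k p e l r' y s ∪ C5set S n l0 l1 dn1 ∪ C6set S g n p6 q6 o6

/-- The generating set `G₁` of `Mod_N` for even genus `g` (Theorems 8 and 9 of the
paper): for `g = 2` it is `{t_{c₁}, σ₁, …, σ_{n-1}, y, ξ₁, ξ₂}`, and for
`g = 2r + 2 ≥ 4` it is `{t_{c_i} (i ≤ g-1), t_{s_i} (i ≤ r), t_{z_i} (i ≤ r+1),
t_{d_i} (i ≤ n-1), σ₁, …, σ_{n-1}, y, ξ₁, ξ₂}` (note `r = g/2 - 1`, `r + 1 = g/2`). -/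
def G1set (S : CurveSystem) (g n : ℕ) (tc ts tz td σ : ℕ → S.MCG) (y ξ1 ξ2 : S.MCG) :
    Set S.MCG :=
  if g = 2 then {tc 1} ∪ σ '' Set.Icc 1 (n - 1) ∪ {y, ξ1, ξ2}
  else
    tc '' Set.Icc 1 (g - 1) ∪ ts '' Set.Icc 1 (g / 2 - 1) ∪ tz '' Set.Icc 1 (g / 2) ∪
      td '' Set.Icc 1 (n - 1) ∪ σ '' Set.Icc 1 (n - 1) ∪ {y, ξ1, ξ2}

/-- The generating set `G₂` of `Mod_N` for odd genus `g` (Theorems 11 and 12 of the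
paper): for `g = 1` it is `{σ₁, …, σ_{n-1}, ξ₁}`, and for `g = 2r + 1 ≥ 3` it is
`{t_{c_i} (i ≤ g-1), t_{s_i} (i ≤ r), t_{z_i} (i ≤ r), t_{d_i} (i ≤ n-1),
σ₁, …, σ_{n-1}, y, ξ₁}` (note `r = g/2`). -/
def G2set (S : CurveSystem) (g n : ℕ) (tc ts tz td σ : ℕ → S.MCG) (y ξ1 : S.MCG) :
    Set S.MCG :=
  if g = 1 then σ '' Set.Icc 1 (n - 1) ∪ {ξ1}
  else
    tc '' Set.Icc 1 (g - 1) ∪ ts '' Set.Icc 1 (g / 2) ∪ tz '' Set.Icc 1 (g / 2) ∪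
      td '' Set.Icc 1 (n - 1) ∪ σ '' Set.Icc 1 (n - 1) ∪ {y, ξ1}

/-- The increasing sequence `Z₁ = C`, `Z_k = Z_{k-1} ∪ ⋃_{f ∈ G} (f(Z_{k-1}) ∪
f⁻¹(Z_{k-1}))` for `k ≥ 2` (indexed here by `k : ℕ` starting at `0`). -/
def Zseq (S : CurveSystem) (C : Set S.Vertex) (G : Set S.MCG) : ℕ → Set S.Vertex
  | 0 => C
  | k + 1 => Zseq S C G k ∪ ⋃ f ∈ G, (S.act f '' Zseq S C G k ∪ S.act f⁻¹ '' Zseq S C G k)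

end CurveSystem

namespace CurveSystem

variable {S : CurveSystem}

lemma act_inv_act (f : S.MCG) (v : S.Vertex) : S.act f⁻¹ (S.act f v) = v := by
  rw [← S.act_mul, inv_mul_cancel, S.act_one]

lemma act_act_inv (f : S.MCG) (v : S.Vertex) : S.act f (S.act f⁻¹ v) = v := by
  rw [← S.act_mul, mul_inv_cancel, S.act_one]

lemma act_injective (f : S.MCG) : Function.Injective (S.act f) := by
  intro a b h
  have h2 := congrArg (S.act f⁻¹) h
  rwa [act_inv_act, act_inv_act] at h2

lemma simplicialOn_mono {A B : Set S.Vertex} (h : A ⊆ B) {l : S.Vertex → S.Vertex}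
    (hl : S.SimplicialOn B l) : S.SimplicialOn A l :=
  fun a ha b hb => hl a (h ha) b (h hb)

lemma superinjectiveOn_mono {A B : Set S.Vertex} (h : A ⊆ B) {l : S.Vertex → S.Vertex}
    (hl : S.SuperinjectiveOn B l) : S.SuperinjectiveOn A l :=
  fun a ha b hb => hl a (h ha) b (h hb)

lemma trivialStab_mono {A B : Set S.Vertex} (h : A ⊆ B)
    (hA : S.TrivialPointwiseStabilizer A) : S.TrivialPointwiseStabilizer B :=
  fun f hf => hA f (fun v hv => hf v (h hv))

/-- Precomposing a simplicial map with a mapping class yields a simplicial map. -/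
lemma simplicialOn_comp_act {B : Set S.Vertex} {l : S.Vertex → S.Vertex}
    (hl : S.SimplicialOn B l) (f : S.MCG) {A : Set S.Vertex}
    (hAB : S.act f '' A ⊆ B) : S.SimplicialOn A (fun v => l (S.act f v)) := by
  intro a ha b hb hne hib
  have h1 : S.act f a ≠ S.act f b := fun hc => hne (act_injective f hc)
  have h2 : S.inter (S.act f a) (S.act f b) = 0 := by rw [S.act_inter]; exact hib
  exact hl _ (hAB ⟨a, ha, rfl⟩) _ (hAB ⟨b, hb, rfl⟩) h1 h2

lemma superinjectiveOn_comp_act {B : Set S.Vertex} {l : S.Vertex → S.Vertex}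
    (hl : S.SuperinjectiveOn B l) (f : S.MCG) {A : Set S.Vertex}
    (hAB : S.act f '' A ⊆ B) : S.SuperinjectiveOn A (fun v => l (S.act f v)) := by
  intro a ha b hb hib
  have h2 : S.inter (S.act f a) (S.act f b) ≠ 0 := by rw [S.act_inter]; exact hib
  exact hl _ (hAB ⟨a, ha, rfl⟩) _ (hAB ⟨b, hb, rfl⟩) h2

/-- Key inductive step: if `Zp ⊇ C` is superrigid and for every `f ∈ G` there is a
subset `L_f ⊆ C` with trivial pointwise stabilizer and `f(L_f) ⊆ C`, then
`Zp ∪ ⋃_{f ∈ G} (f(Zp) ∪ f⁻¹(Zp))` is superrigid. -/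
lemma superrigid_step {C Zp : Set S.Vertex} {G : Set S.MCG}
    (hCZ : C ⊆ Zp) (hZsr : S.Superrigid Zp)
    (hLf : ∀ f ∈ G, ∃ L : Set S.Vertex,
      L ⊆ C ∧ S.TrivialPointwiseStabilizer L ∧ S.act f '' L ⊆ C) :
    S.Superrigid (Zp ∪ ⋃ f ∈ G, (S.act f '' Zp ∪ S.act f⁻¹ '' Zp)) := by
  intro l hsimp hsup
  set Znew := Zp ∪ ⋃ f ∈ G, (S.act f '' Zp ∪ S.act f⁻¹ '' Zp) with hZnew
  have hsub : Zp ⊆ Znew := Set.subset_union_left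
  obtain ⟨h, hh⟩ := hZsr l (simplicialOn_mono hsub hsimp) (superinjectiveOn_mono hsub hsup)
  refine ⟨h, ?_⟩
  rintro x (hx | hx)
  · exact hh x hx
  · simp only [Set.mem_iUnion] at hx
    obtain ⟨f, hf, hx⟩ := hx
    obtain ⟨L, hLC, hLtriv, hfLC⟩ := hLf f hf
    -- images of Zp under f and f⁻¹ lie in Znew
    have himg : S.act f '' Zp ⊆ Znew := fun z hz => Or.inr <| by
      simp only [Set.mem_iUnion]; exact ⟨f, hf, Or.inl hz⟩
    have himg' : S.act f⁻¹ '' Zp ⊆ Znew := fun z hz => Or.inr <| by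
      simp only [Set.mem_iUnion]; exact ⟨f, hf, Or.inr hz⟩
    rcases hx with hx | hx
    · -- x = act f u, u ∈ Zp
      obtain ⟨u, hu, rfl⟩ := hx
      obtain ⟨hf', hhf⟩ := hZsr (fun v => l (S.act f v))
        (simplicialOn_comp_act hsimp f himg) (superinjectiveOn_comp_act hsup f himg)
      -- show hf' = h * f using the pinning set L
      have heq : hf' = h * f := by
        have : ((h * f)⁻¹ * hf') = 1 := by
          apply hLtriv
          intro v hv
          have hvZ : v ∈ Zp := hCZ (hLC hv)
          have hfvZ : S.act f v ∈ Zp := hCZ (hfLC ⟨v, hv, rfl⟩)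
          have h1 : S.act hf' v = S.act (h * f) v := by
            rw [hhf v hvZ, S.act_mul, hh _ hfvZ]
          rw [S.act_mul, h1, ← S.act_mul, inv_mul_cancel, S.act_one]
        calc hf' = (h * f) * ((h * f)⁻¹ * hf') := by group
        _ = h * f := by rw [this, mul_one]
      have h3 := hhf u hu
      rw [heq, S.act_mul] at h3
      exact h3
    · -- x = act f⁻¹ u, u ∈ Zp
      obtain ⟨u, hu, rfl⟩ := hx
      obtain ⟨hf', hhf⟩ := hZsr (fun v => l (S.act f⁻¹ v))
        (simplicialOn_comp_act hsimp f⁻¹ himg') (superinjectiveOn_comp_act hsup f⁻¹ himg')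
      -- pinning set is act f '' L
      have hLtriv' : S.TrivialPointwiseStabilizer (S.act f '' L) := by
        intro g hg
        have : f⁻¹ * g * f = 1 := by
          apply hLtriv
          intro v hv
          have := hg (S.act f v) ⟨v, hv, rfl⟩
          rw [S.act_mul, S.act_mul, this, act_inv_act]
        have h2 : g = f * (f⁻¹ * g * f) * f⁻¹ := by group
        rw [h2, this, mul_one, mul_inv_cancel]
      have heq : hf' = h * f⁻¹ := by
        have : ((h * f⁻¹)⁻¹ * hf') = 1 := by
          apply hLtriv'
          rintro v' ⟨v, hv, rfl⟩
          have hvZ : v ∈ Zp := hCZ (hLC hv)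
          have hfvZ : S.act f v ∈ Zp := hCZ (hfLC ⟨v, hv, rfl⟩)
          have h1 : S.act hf' (S.act f v) = S.act (h * f⁻¹) (S.act f v) := by
            rw [hhf _ hfvZ]
            show l (S.act f⁻¹ (S.act f v)) = _
            rw [act_inv_act, S.act_mul, act_inv_act, hh _ hvZ]
          rw [S.act_mul, h1, ← S.act_mul, inv_mul_cancel, S.act_one]
        calc hf' = (h * f⁻¹) * ((h * f⁻¹)⁻¹ * hf') := by group
        _ = h * f⁻¹ := by rw [this, mul_one]
      have h3 := hhf u hu
      rw [heq, S.act_mul] at h3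
      exact h3

end CurveSystem


/-- Let `N` be a compact, connected, nonorientable surface of genus
`g` with `n` boundary components, `g + n ≥ 5`, `g` even.  Let
`C = C₁ ∪ ⋯ ∪ C₆` be the finite superrigid set with trivial pointwise stabilizer
constructed in the paper (hypotheses `hCfin`, `hCsr`, `hCtriv`), which contains a
curve of every topological type (so every vertex is in the `Mod_N`-orbit of `C`,
hypothesis `horb`), and let `G₁` be the stated generating set of `Mod_N` (hypothesis
`hgen`; for each `f ∈ G₁` there is `L_f ⊆ C` with trivial pointwise stabilizer and
`f(L_f) ⊆ C`, hypothesis `hLf`).  Define `Z₁ = C` and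
`Z_k = Z_{k-1} ∪ ⋃_{f ∈ G₁} (f(Z_{k-1}) ∪ f⁻¹(Z_{k-1}))` for `k ≥ 2`.  Then each
`Z_k` is a finite superrigid set in `C(N)` with trivial pointwise stabilizer in
`Mod_N`, `Z₁ ⊆ Z₂ ⊆ ⋯`, and `⋃_k Z_k = C(N)`. -/
theorem exhaustion_even_genus
    (g n : ℕ) (hgn : 5 ≤ g + n) (hgeven : Even g) (S : CurveSystem)
    (a : ℕ → S.Vertex) (A B : ℕ → ℕ → S.Vertex)
    (w r c d u v k p e l r' y' s : ℕ → S.Vertex) (l0 l1 dn1 : S.Vertex)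
    (p6 : ℕ → ℕ → S.Vertex) (q6 o6 : ℕ → S.Vertex)
    (tc ts tz td σ : ℕ → S.MCG) (y ξ1 ξ2 : S.MCG)
    (C : Set S.Vertex)
    (hC : C = CurveSystem.Call S g n a A B w r c d u v k p e l r' y' s l0 l1 dn1 p6 q6 o6)
    (G : Set S.MCG)
    (hG : G = CurveSystem.G1set S g n tc ts tz td σ y ξ1 ξ2)
    (hCfin : C.Finite) (hCsr : S.Superrigid C) (hCtriv : S.TrivialPointwiseStabilizer C)
    (horb : ∀ x : S.Vertex, ∃ f : S.MCG, ∃ v ∈ C, S.act f v = x)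
    (hgen : Subgroup.closure G = ⊤)
    (hLf : ∀ f ∈ G, ∃ L : Set S.Vertex,
      L ⊆ C ∧ S.TrivialPointwiseStabilizer L ∧ S.act f '' L ⊆ C) :
    (∀ m : ℕ, (CurveSystem.Zseq S C G m).Finite ∧
      S.Superrigid (CurveSystem.Zseq S C G m) ∧
      S.TrivialPointwiseStabilizer (CurveSystem.Zseq S C G m)) ∧
    (∀ m : ℕ, CurveSystem.Zseq S C G m ⊆ CurveSystem.Zseq S C G (m + 1)) ∧
    (⋃ m : ℕ, CurveSystem.Zseq S C G m) = Set.univ := by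
  -- G is finite
  have hGfin : G.Finite := by
    subst hG
    unfold CurveSystem.G1set
    split_ifs
    · exact ((Set.finite_singleton _).union ((Set.finite_Icc _ _).image _)).union
        (((Set.finite_singleton _).insert _).insert _)
    · exact ((((((Set.finite_Icc _ _).image _).union
        ((Set.finite_Icc _ _).image _)).union ((Set.finite_Icc _ _).image _)).union
        ((Set.finite_Icc _ _).image _)).union ((Set.finite_Icc _ _).image _)).union
        (((Set.finite_singleton _).insert _).insert _)
  -- monotonicity
  have hmono : ∀ m : ℕ, CurveSystem.Zseq S C G m ⊆ CurveSystem.Zseq S C G (m + 1) := by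
    intro m
    exact Set.subset_union_left
  -- C is contained in every Z_m
  have hCsub : ∀ m : ℕ, C ⊆ CurveSystem.Zseq S C G m := by
    intro m
    induction m with
    | zero => exact subset_refl C
    | succ k ih => exact ih.trans (hmono k)
  -- the main package by induction
  have hmain : ∀ m : ℕ, (CurveSystem.Zseq S C G m).Finite ∧
      S.Superrigid (CurveSystem.Zseq S C G m) ∧
      S.TrivialPointwiseStabilizer (CurveSystem.Zseq S C G m) := by
    intro m
    induction m with
    | zero => exact ⟨hCfin, hCsr, hCtriv⟩
    | succ k ih =>
      obtain ⟨hfin, hsr, htriv⟩ := ih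
      refine ⟨?_, ?_, ?_⟩
      · exact hfin.union (Set.Finite.biUnion hGfin
          (fun f _ => (hfin.image _).union (hfin.image _)))
      · exact CurveSystem.superrigid_step (hCsub k) hsr hLf
      · exact CurveSystem.trivialStab_mono (hCsub (k + 1)) hCtriv
  refine ⟨hmain, hmono, ?_⟩
  -- exhaustion
  have hP : ∀ f : S.MCG,
      (∃ m, ∀ j, S.act f '' CurveSystem.Zseq S C G j ⊆ CurveSystem.Zseq S C G (j + m)) := by
    intro f
    have hfmem : f ∈ Subgroup.closure G := by rw [hgen]; trivial
    have key : (∃ m, ∀ j, S.act f '' CurveSystem.Zseq S C G j ⊆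
          CurveSystem.Zseq S C G (j + m)) ∧
        (∃ m, ∀ j, S.act f⁻¹ '' CurveSystem.Zseq S C G j ⊆
          CurveSystem.Zseq S C G (j + m)) := by
      induction hfmem using Subgroup.closure_induction with
      | mem x hx =>
        constructor
        · refine ⟨1, fun j => fun z hz => Or.inr ?_⟩
          simp only [Set.mem_iUnion]
          exact ⟨x, hx, Or.inl hz⟩
        · refine ⟨1, fun j => fun z hz => Or.inr ?_⟩
          simp only [Set.mem_iUnion]
          exact ⟨x, hx, Or.inr hz⟩
      | one =>
        constructor <;>
        · refine ⟨0, fun j => ?_⟩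
          rintro z ⟨u, hu, rfl⟩
          simpa [S.act_one] using hu
      | mul x y hx hy ihx ihy =>
        obtain ⟨⟨mx, hmx⟩, ⟨mx', hmx'⟩⟩ := ihx
        obtain ⟨⟨my, hmy⟩, ⟨my', hmy'⟩⟩ := ihy
        constructor
        · refine ⟨my + mx, fun j => ?_⟩
          rintro z ⟨u, hu, rfl⟩
          rw [S.act_mul]
          have h1 : S.act y u ∈ CurveSystem.Zseq S C G (j + my) := hmy j ⟨u, hu, rfl⟩
          have h2 := hmx (j + my) ⟨S.act y u, h1, rfl⟩
          rwa [add_assoc] at h2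
        · refine ⟨mx' + my', fun j => ?_⟩
          rintro z ⟨u, hu, rfl⟩
          rw [mul_inv_rev, S.act_mul]
          have h1 : S.act x⁻¹ u ∈ CurveSystem.Zseq S C G (j + mx') := hmx' j ⟨u, hu, rfl⟩
          have h2 := hmy' (j + mx') ⟨S.act x⁻¹ u, h1, rfl⟩
          rwa [add_assoc] at h2
      | inv x hx ihx =>
        obtain ⟨h1, h2⟩ := ihx
        refine ⟨h2, ?_⟩
        rwa [inv_inv]
    exact key.1
  apply Set.eq_univ_of_forall
  intro x
  obtain ⟨f, v, hv, hfv⟩ := horb x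
  obtain ⟨m, hm⟩ := hP f
  have : x ∈ CurveSystem.Zseq S C G (0 + m) := hm 0 ⟨v, hv, hfv⟩
  exact Set.mem_iUnion.mpr ⟨0 + m, this⟩
end

section
/- Let N be the closed, connected, nonorientable surface of genus 3. Define Z_1 = C = {a_1, a_2, a_3, a_{1,2}, a_{2,3}, a_{3,1}, c_1, c_2, l, w, j} and, for k ≥ 2, Z_k = Z_{k−1} ∪ ⋃_{f ∈ G_3} (f(Z_{k−1}) ∪ f^{−1}(Z_{k−1})), where G_3 = {t_{c_1}, t_{c_2}, y} generates Mod_N. Then each Z_k is a finite superrigid set in C(N), Z_1 ⊂ Z_2 ⊂ ⋯, and ⋃_{k∈ℕ} Z_k = C(N). -/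
/-!
A superinjective simplicial map `λ` of `Z_{k+1}` restricts to `Z_k` and to each translate
`f^{±1}(Z_k)`, which are superrigid, so each restriction is induced by some mapping class.
Two of these mapping classes agree on `L_f` or on `f(L_f)`, a set lying in both domains whose
pointwise stabilizer is the center, which acts trivially; hence they act identically on
`C(N)`, and the one inducing `λ` on `Z_k` induces it on all of `Z_{k+1}`. Exhaustion holds
because `C` meets every orbit and every mapping class is a word in `G₃`.
-/

namespace CurveSystem

variable {S : CurveSystem}

instance (S : CurveSystem) : MulAction S.MCG S.Vertex where
  smul := S.act
  one_smul := S.act_one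
  mul_smul := S.act_mul

section Maps

variable {A B : Set S.Vertex} {l : S.Vertex → S.Vertex}

lemma SimplicialOn.mono (hl : S.SimplicialOn B l) (h : A ⊆ B) : S.SimplicialOn A l :=
  fun a ha b hb => hl a (h ha) b (h hb)

lemma SuperinjectiveOn.mono (hl : S.SuperinjectiveOn B l) (h : A ⊆ B) :
    S.SuperinjectiveOn A l :=
  fun a ha b hb => hl a (h ha) b (h hb)

lemma SimplicialOn.conj_act (hl : S.SimplicialOn (S.act f '' A) l) (g : S.MCG) :
    S.SimplicialOn A (fun v => S.act g (l (S.act f v))) := by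
  intro a ha b hb hab hab0
  rcases hl _ (Set.mem_image_of_mem _ ha) _ (Set.mem_image_of_mem _ hb)
      ((act_injective f).ne hab) (by rwa [S.act_inter]) with heq | h0
  · exact Or.inl (congrArg (S.act g) heq)
  · exact Or.inr (by rwa [S.act_inter])

lemma SuperinjectiveOn.conj_act (hl : S.SuperinjectiveOn (S.act f '' A) l) (g : S.MCG) :
    S.SuperinjectiveOn A (fun v => S.act g (l (S.act f v))) := by
  intro a ha b hb hab
  rw [S.act_inter]
  exact hl _ (Set.mem_image_of_mem _ ha) _ (Set.mem_image_of_mem _ hb) (by rwa [S.act_inter])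

lemma Superrigid.image (hA : S.Superrigid A) (f : S.MCG) : S.Superrigid (S.act f '' A) := by
  intro l hs hsi
  obtain ⟨h, hh⟩ := hA _ (hs.conj_act f⁻¹) (hsi.conj_act f⁻¹)
  refine ⟨f * h * f⁻¹, ?_⟩
  rintro _ ⟨v, hv, rfl⟩
  rw [S.act_mul, S.act_mul, act_inv_act, hh v hv, act_act_inv]

end Maps

variable (S) in
def PointwiseStabilizerActsTrivially (M : Set S.Vertex) : Prop :=
  ∀ m : S.MCG, (∀ v ∈ M, S.act m v = v) → ∀ v, S.act m v = v

namespace PointwiseStabilizerActsTrivially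

variable {M : Set S.Vertex}

lemma act_eq_of_eqOn (hM : S.PointwiseStabilizerActsTrivially M) {g h : S.MCG}
    (hgh : ∀ v ∈ M, S.act g v = S.act h v) (v : S.Vertex) : S.act g v = S.act h v := by
  have hv := hM (h⁻¹ * g) (fun u hu => by rw [S.act_mul, hgh u hu, act_inv_act]) v
  rw [S.act_mul] at hv
  simpa only [act_act_inv] using congrArg (S.act h) hv

lemma image (hM : S.PointwiseStabilizerActsTrivially M) (f : S.MCG) :
    S.PointwiseStabilizerActsTrivially (S.act f '' M) := by
  intro m hm v
  have hconj : ∀ u, S.act (f⁻¹ * m * f) u = S.act 1 u := hM.act_eq_of_eqOn fun u hu => by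
    rw [S.act_mul, S.act_mul, hm _ (Set.mem_image_of_mem _ hu), act_inv_act, S.act_one]
  have hv := congrArg (S.act f) (hconj (S.act f⁻¹ v))
  rwa [S.act_mul, S.act_mul, act_act_inv, act_act_inv, S.act_one, act_act_inv] at hv

end PointwiseStabilizerActsTrivially

lemma superrigid_of_cover {Z A : Set S.Vertex} (hAZ : A ⊆ Z) (hA : S.Superrigid A)
    (hcover : ∀ v ∈ Z, v ∈ A ∨ ∃ B ⊆ Z, v ∈ B ∧ S.Superrigid B ∧
      ∃ M ⊆ A ∩ B, S.PointwiseStabilizerActsTrivially M) :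
    S.Superrigid Z := by
  intro l hs hsi
  obtain ⟨h, hh⟩ := hA l (hs.mono hAZ) (hsi.mono hAZ)
  refine ⟨h, fun v hv => ?_⟩
  rcases hcover v hv with hvA | ⟨B, hBZ, hvB, hB, M, hMAB, hM⟩
  · exact hh v hvA
  obtain ⟨h', hh'⟩ := hB l (hs.mono hBZ) (hsi.mono hBZ)
  have hagree : ∀ u ∈ M, S.act h u = S.act h' u := fun u hu => by
    rw [hh u (hMAB hu).1, hh' u (hMAB hu).2]
  rw [hM.act_eq_of_eqOn hagree v]
  exact hh' v hvB

section Zseq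

variable {C : Set S.Vertex} {G : Set S.MCG}

lemma Zseq_subset_succ (k : ℕ) : Zseq S C G k ⊆ Zseq S C G (k + 1) :=
  Set.subset_union_left

lemma subset_Zseq (k : ℕ) : C ⊆ Zseq S C G k :=
  monotone_nat_of_le_succ Zseq_subset_succ (Nat.zero_le k)

lemma image_Zseq_subset_succ {f : S.MCG} (hf : f ∈ G) (k : ℕ) :
    S.act f '' Zseq S C G k ⊆ Zseq S C G (k + 1) :=
  fun _ hv => Or.inr (Set.mem_biUnion hf (Or.inl hv))

lemma image_inv_Zseq_subset_succ {f : S.MCG} (hf : f ∈ G) (k : ℕ) :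
    S.act f⁻¹ '' Zseq S C G k ⊆ Zseq S C G (k + 1) :=
  fun _ hv => Or.inr (Set.mem_biUnion hf (Or.inr hv))

lemma Zseq_finite (hC : C.Finite) (hG : G.Finite) (k : ℕ) : (Zseq S C G k).Finite := by
  induction k with
  | zero => exact hC
  | succ k ih => exact ih.union (hG.biUnion fun f _ => (ih.image _).union (ih.image _))

lemma superrigid_Zseq (hC : S.Superrigid C)
    (hL : ∀ f ∈ G, ∃ L ⊆ C, S.PointwiseStabilizerActsTrivially L ∧ S.act f '' L ⊆ C)
    (k : ℕ) : S.Superrigid (Zseq S C G k) := by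
  induction k with
  | zero => exact hC
  | succ k ih =>
    refine superrigid_of_cover (Zseq_subset_succ k) ih fun v hv => ?_
    rcases hv with hv | hv
    · exact Or.inl hv
    obtain ⟨f, hf, hv⟩ := Set.mem_iUnion₂.1 hv
    obtain ⟨L, hLC, hLtriv, hfL⟩ := hL f hf
    have hLk : L ⊆ Zseq S C G k := hLC.trans (subset_Zseq k)
    refine Or.inr ?_
    rcases hv with hv | hv
    · refine ⟨_, image_Zseq_subset_succ hf k, hv, ih.image f, S.act f '' L,
        Set.subset_inter (hfL.trans (subset_Zseq k)) (Set.image_mono hLk), hLtriv.image f⟩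
    · refine ⟨_, image_inv_Zseq_subset_succ hf k, hv, ih.image f⁻¹, L,
        Set.subset_inter hLk fun u hu => ⟨S.act f u, ?_, act_inv_act f u⟩, hLtriv⟩
      exact hfL.trans (subset_Zseq k) (Set.mem_image_of_mem _ hu)

lemma iUnion_Zseq_eq_univ (hgen : Subgroup.closure G = ⊤)
    (horb : ∀ x : S.Vertex, ∃ f : S.MCG, ∃ v ∈ C, S.act f v = x) :
    ⋃ k, Zseq S C G k = Set.univ := by
  have htrans : ∀ g : S.MCG, ∀ k, ∃ k', S.act g '' Zseq S C G k ⊆ Zseq S C G k' := by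
    intro g
    induction (hgen ▸ Subgroup.mem_top g : g ∈ Subgroup.closure G)
      using Subgroup.closure_induction'' with
    | mem f hf => exact fun k => ⟨k + 1, image_Zseq_subset_succ hf k⟩
    | inv_mem f hf => exact fun k => ⟨k + 1, image_inv_Zseq_subset_succ hf k⟩
    | one => exact fun k => ⟨k, by rintro _ ⟨v, hv, rfl⟩; rwa [S.act_one]⟩
    | mul g₁ g₂ _ _ ih₁ ih₂ =>
      intro k
      obtain ⟨k₂, hk₂⟩ := ih₂ k
      obtain ⟨k₁, hk₁⟩ := ih₁ k₂
      refine ⟨k₁, ?_⟩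
      rintro _ ⟨v, hv, rfl⟩
      rw [S.act_mul]
      exact hk₁ (Set.mem_image_of_mem _ (hk₂ (Set.mem_image_of_mem _ hv)))
  refine Set.eq_univ_of_forall fun x => ?_
  obtain ⟨f, v, hvC, rfl⟩ := horb x
  obtain ⟨k, hk⟩ := htrans f 0
  exact Set.mem_iUnion.2 ⟨k, hk (Set.mem_image_of_mem _ hvC)⟩

end Zseq

end CurveSystem

theorem exhaustion_genus_three_closed_general
    (S : CurveSystem)
    (a1 a2 a3 A12 A23 A31 c1 c2 l w j : S.Vertex)
    (tc1 tc2 y ι : S.MCG)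
    (C : Set S.Vertex)
    (hC : C = ({a1, a2, a3, A12, A23, A31, c1, c2, l, w, j} : Set S.Vertex))
    (G : Set S.MCG)
    (hG : G = ({tc1, tc2, y} : Set S.MCG))
    (hgen : Subgroup.closure G = ⊤)
    (hcenter : Subgroup.center S.MCG = Subgroup.zpowers ι)
    (hιfix : ∀ v : S.Vertex, S.act ι v = v)
    (hCsr : S.Superrigid C)
    (horb : ∀ x : S.Vertex, ∃ f : S.MCG, ∃ v ∈ C, S.act f v = x)
    (hLf : ∀ f ∈ G, ∃ L : Set S.Vertex, L ⊆ C ∧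
      (∀ m : S.MCG, (∀ v ∈ L, S.act m v = v) ↔ m ∈ Subgroup.center S.MCG) ∧
      S.act f '' L ⊆ C) :
    (∀ m : ℕ, (CurveSystem.Zseq S C G m).Finite ∧
      S.Superrigid (CurveSystem.Zseq S C G m)) ∧
    (∀ m : ℕ, CurveSystem.Zseq S C G m ⊆ CurveSystem.Zseq S C G (m + 1)) ∧
    (⋃ m : ℕ, CurveSystem.Zseq S C G m) = Set.univ := by
  have hcenter_trivial : Subgroup.center S.MCG ≤ fixingSubgroup S.MCG Set.univ :=
    hcenter ▸ Subgroup.zpowers_le.2 ((mem_fixingSubgroup_iff S.MCG).2 fun v _ => hιfix v)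
  have hL : ∀ f ∈ G, ∃ L ⊆ C,
      S.PointwiseStabilizerActsTrivially L ∧ S.act f '' L ⊆ C := by
    intro f hf
    obtain ⟨L, hLC, hstab, hfL⟩ := hLf f hf
    exact ⟨L, hLC, fun m hm v =>
      (mem_fixingSubgroup_iff S.MCG).1 (hcenter_trivial ((hstab m).1 hm)) v trivial, hfL⟩
  have hCfin : C.Finite := hC ▸ Set.toFinite _
  have hGfin : G.Finite := hG ▸ Set.toFinite _
  exact ⟨fun k => ⟨CurveSystem.Zseq_finite hCfin hGfin k,
      CurveSystem.superrigid_Zseq hCsr hL k⟩,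
    CurveSystem.Zseq_subset_succ, CurveSystem.iUnion_Zseq_eq_univ hgen horb⟩

/-- Let `N` be the closed, connected, nonorientable surface of genus
3.  Let `C = {a₁, a₂, a₃, a_{1,2}, a_{2,3}, a_{3,1}, c₁, c₂, l, w, j}` be the finite
superrigid set of the paper's Figure 14 (hypothesis `hCsr`), containing a curve of
every topological type (hypothesis `horb`), and let `G₃ = {t_{c₁}, t_{c₂}, y}` be a
generating set of `Mod_N` (hypothesis `hgen`), where `t_{c_i}` are Dehn twists and
`y` is the crosscap slide.  By Stukow's theorem the center of `Mod_N` is generated by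
an involution `ι` fixing every vertex of `C(N)` (hypotheses `hcenter`, `hι2`, `hιfix`),
and for each `f ∈ G₃` there is `L_f ⊆ C` whose pointwise stabilizer equals the center
and with `f(L_f) ⊆ C` (hypothesis `hLf`).  Define `Z₁ = C` and
`Z_k = Z_{k-1} ∪ ⋃_{f ∈ G₃} (f(Z_{k-1}) ∪ f⁻¹(Z_{k-1}))` for `k ≥ 2`.  Then each
`Z_k` is a finite superrigid set in `C(N)`, `Z₁ ⊆ Z₂ ⊆ ⋯`, and `⋃_k Z_k = C(N)`. -/
theorem exhaustion_genus_three_closed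
    (S : CurveSystem)
    (a1 a2 a3 A12 A23 A31 c1 c2 l w j : S.Vertex)
    (tc1 tc2 y ι : S.MCG)
    (C : Set S.Vertex)
    (hC : C = ({a1, a2, a3, A12, A23, A31, c1, c2, l, w, j} : Set S.Vertex))
    (G : Set S.MCG)
    (hG : G = ({tc1, tc2, y} : Set S.MCG))
    (hgen : Subgroup.closure G = ⊤)
    (hcenter : Subgroup.center S.MCG = Subgroup.zpowers ι)
    (hι2 : ι * ι = 1)
    (hιfix : ∀ v : S.Vertex, S.act ι v = v)
    (hCsr : S.Superrigid C)
    (horb : ∀ x : S.Vertex, ∃ f : S.MCG, ∃ v ∈ C, S.act f v = x)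
    (hLf : ∀ f ∈ G, ∃ L : Set S.Vertex, L ⊆ C ∧
      (∀ m : S.MCG, (∀ v ∈ L, S.act m v = v) ↔ m ∈ Subgroup.center S.MCG) ∧
      S.act f '' L ⊆ C) :
    (∀ m : ℕ, (CurveSystem.Zseq S C G m).Finite ∧
      S.Superrigid (CurveSystem.Zseq S C G m)) ∧
    (∀ m : ℕ, CurveSystem.Zseq S C G m ⊆ CurveSystem.Zseq S C G (m + 1)) ∧
    (⋃ m : ℕ, CurveSystem.Zseq S C G m) = Set.univ :=
  exhaustion_genus_three_closed_general S a1 a2 a3 A12 A23 A31 c1 c2 l w j tc1 tc2 y ι C hC G hG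
    hgen hcenter hιfix hCsr horb hLf
end
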